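/- arXiv:1511.00562 — 2 statements merged into one kernel-verified Lean document; each statement's English description precedes it below -/
import Mathlib

section
/- Let h, n be positive integers with d_max ≤ h, and let v ∈ F₂^h have Hamming weight l with 1 ≤ l ≤ h. If G ∈ F₂^{h×n} is the random LT generator matrix (n i.i.d. LT columns), then for every 0 ≤ d ≤ n the probability that the codeword vᵀG has Hamming weight d equals C(n,d)·p_l^d·(1−p_l)^{n−d}. -/
/-!
The `n` columns of `G` are independent, and coordinate `i` of `vᵀG` is nonzero exactly when the
`i`-th column `c` satisfies `v ⬝ c = 1`, i.e. when the supports of `v` and `c` meet in an odd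
number of positions. So the weight of `vᵀG` is binomially distributed with success probability
`P(v ⬝ c = 1)`. Conditioned on the degree `j` of `c`, this probability is the fraction of
`j`-subsets meeting a fixed `l`-subset in an odd number of points, which an exchange of binomial
coefficients identifies with `p_{j,l}`; averaging over `j` gives `p_l`.
-/

open Finset

/-- Probability that the LT column distribution on `F₂^h` produces the particular
column `c`. -/
noncomputable def colP (dmax : ℕ) (Ω : ℕ → ℝ) {h : ℕ} (c : Fin h → ZMod 2) : ℝ :=
  if 1 ≤ hammingNorm c ∧ hammingNorm c ≤ dmax then
    Ω (hammingNorm c) / (h.choose (hammingNorm c)) else 0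

/-- `p_{j,l} = Σ_{i odd, max(1, l+j−h) ≤ i ≤ min(l,j)} C(j,i)·C(h−j, l−i)/C(h,l)`. -/
noncomputable def pjl (h j l : ℕ) : ℝ :=
  ∑ i ∈ (Finset.Icc (max 1 (l + j - h)) (min l j)).filter (fun i => Odd i),
    ((j.choose i : ℝ) * ((h - j).choose (l - i) : ℝ)) / (h.choose l : ℝ)

/-- `p_l = Σ_{j=1}^{dmax} Ω_j · p_{j,l}`. -/
noncomputable def pl (dmax : ℕ) (Ω : ℕ → ℝ) (h l : ℕ) : ℝ :=
  ∑ j ∈ Finset.Icc 1 dmax, Ω j * pjl h j l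

theorem sum_prod_filter_card_eq_choose_mul_pow {ι α R : Type*} [Fintype ι] [DecidableEq ι]
    [Fintype α] [CommSemiring R] (f : α → R) (p : α → Prop) [DecidablePred p] (d : ℕ) :
    ∑ g : ι → α with #{i | p (g i)} = d, ∏ i, f (g i) =
      (Fintype.card ι).choose d * (∑ a with p a, f a) ^ d *
        (∑ a with ¬ p a, f a) ^ (Fintype.card ι - d) := by
  have fiber (S : Finset ι) :
      ∑ g : ι → α with ({i | p (g i)} : Finset ι) = S, ∏ i, f (g i) =
        (∑ a with p a, f a) ^ #S * (∑ a with ¬ p a, f a) ^ #Sᶜ := by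
    have hpi : ({g : ι → α | ({i | p (g i)} : Finset ι) = S} : Finset _) =
        Fintype.piFinset fun i => {a | p a ↔ i ∈ S} := by
      ext g
      simp [Finset.ext_iff]
    rw [hpi, ← prod_univ_sum, ← prod_mul_prod_compl S, ← prod_const, ← prod_const]
    congr 1 <;> refine prod_congr rfl fun i hi => ?_ <;> simp_all
  rw [← sum_fiberwise_of_maps_to (g := fun g : ι → α => ({i | p (g i)} : Finset ι))
    (t := powersetCard d univ) (by simp)]
  calc _ = ∑ S ∈ powersetCard d univ, (∑ a with p a, f a) ^ d *
        (∑ a with ¬ p a, f a) ^ (Fintype.card ι - d) := by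
        refine sum_congr rfl fun S hS => ?_
        rw [mem_powersetCard_univ] at hS
        rw [filter_filter, ← hS, ← card_compl, ← fiber]
        congr 1
        exact filter_congr fun g _ => and_iff_right_of_imp (congrArg card)
    _ = _ := by rw [sum_const, card_powersetCard, card_univ, nsmul_eq_mul, mul_assoc]

section

variable {ι : Type*} [Fintype ι] [DecidableEq ι]

theorem card_filter_card_inter_eq_choose_mul_choose (T : Finset ι) {i j : ℕ} (hij : i ≤ j) :
    #{S : Finset ι | #(T ∩ S) = i ∧ #S = j} = (#T).choose i * (#Tᶜ).choose (j - i) := by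
  rw [← card_powersetCard, ← card_powersetCard, ← card_product]
  have split {A B : Finset ι} (hA : A ⊆ T) (hB : B ⊆ Tᶜ) :
      T ∩ (A ∪ B) = A ∧ (A ∪ B) \ T = B := by
    constructor <;> ext x <;> have := @hA x <;> have := @hB x <;> simp at * <;> tauto
  refine card_nbij' (fun S => (T ∩ S, S \ T)) (fun AB => AB.1 ∪ AB.2) ?_ ?_ ?_ ?_
  · intro S hS
    simp only [mem_coe, mem_filter, mem_univ, true_and, mem_product, mem_powersetCard] at hS ⊢
    refine ⟨⟨inter_subset_left, hS.1⟩, fun x hx => by simp_all, ?_⟩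
    have := card_inter_add_card_sdiff S T
    rw [inter_comm] at this
    omega
  · rintro ⟨A, B⟩ hAB
    simp only [mem_coe, mem_filter, mem_univ, true_and, mem_product, mem_powersetCard] at hAB ⊢
    obtain ⟨⟨hAT, rfl⟩, hBT, hB⟩ := hAB
    have hdisj : Disjoint A B :=
      disjoint_of_subset_left hAT (subset_compl_iff_disjoint_left.mp hBT)
    rw [(split hAT hBT).1, card_union_of_disjoint hdisj]
    omega
  · intro S _
    exact (congrArg (· ∪ S \ T) (inter_comm T S)).trans (sup_inf_sdiff S T)
  · rintro ⟨A, B⟩ hAB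
    simp only [mem_coe, mem_product, mem_powersetCard] at hAB
    simp [split hAB.1.1 hAB.2.1]

theorem card_filter_odd_card_inter (T : Finset ι) (j : ℕ) :
    #{S : Finset ι | Odd #(T ∩ S) ∧ #S = j} =
      ∑ i ∈ (Icc (max 1 (#T + j - Fintype.card ι)) (min #T j)).filter Odd,
        (#T).choose i * (Fintype.card ι - #T).choose (j - i) := by
  refine card_eq_sum_card_fiberwise (f := fun S => #(T ∩ S)) (fun S hS => ?_) |>.trans
    (sum_congr rfl fun i hi => ?_)
  · simp only [coe_filter, mem_univ, true_and, Set.mem_ofPred_eq] at hS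
    obtain ⟨hodd, rfl⟩ := hS
    have := card_union_add_card_inter T S
    have := card_le_univ (T ∪ S)
    have := card_le_card (inter_subset_left (s₁ := T) (s₂ := S))
    have := card_le_card (inter_subset_right (s₁ := T) (s₂ := S))
    simp only [mem_coe, mem_filter, mem_Icc, max_le_iff, le_min_iff]
    exact ⟨⟨⟨hodd.pos, by omega⟩, by omega, by omega⟩, hodd⟩
  · simp only [mem_filter, mem_Icc, le_min_iff] at hi
    rw [filter_filter, ← card_compl, ← card_filter_card_inter_eq_choose_mul_choose T hi.1.2.2]
    congr 1
    refine filter_congr fun S _ => ?_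
    constructor
    · rintro ⟨⟨-, hS⟩, hTS⟩
      exact ⟨hTS, hS⟩
    · rintro ⟨rfl, hS⟩
      exact ⟨⟨hi.2, hS⟩, rfl⟩

variable (ι) in
def finsetEquivZModTwo : Finset ι ≃ (ι → ZMod 2) where
  toFun S i := if i ∈ S then 1 else 0
  invFun c := {i | c i ≠ 0}
  left_inv S := by ext; simp
  right_inv c := by
    funext i
    have : ∀ x : ZMod 2, x ≠ 0 → x = 1 := by decide
    by_cases hc : c i = 0 <;> simp [hc, this]

theorem hammingNorm_finsetEquivZModTwo (S : Finset ι) :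
    hammingNorm (finsetEquivZModTwo ι S) = #S := by
  simp [hammingNorm, finsetEquivZModTwo]

theorem dotProduct_finsetEquivZModTwo (T S : Finset ι) :
    finsetEquivZModTwo ι T ⬝ᵥ finsetEquivZModTwo ι S = #(T ∩ S) := by
  simp [dotProduct, finsetEquivZModTwo, ← ite_and, ← mem_inter, inter_comm]

end

theorem Nat.choose_mul_choose_mul_choose_sub_comm {h l j i : ℕ} (hil : i ≤ l) (hij : i ≤ j)
    (hlh : l ≤ h) (hjh : j ≤ h) (hlj : l + j ≤ h + i) :
    h.choose l * (l.choose i * (h - l).choose (j - i)) =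
      h.choose j * (j.choose i * (h - j).choose (l - i)) := by
  have hrest : h - l - (j - i) = h - j - (l - i) := by omega
  suffices (h.choose l * (l.choose i * (h - l).choose (j - i)) : ℚ) =
      h.choose j * (j.choose i * (h - j).choose (l - i)) by exact_mod_cast this
  rw [Nat.cast_choose ℚ hlh, Nat.cast_choose ℚ hil, Nat.cast_choose ℚ hjh,
    Nat.cast_choose ℚ hij, Nat.cast_choose ℚ (by omega : j - i ≤ h - l),
    Nat.cast_choose ℚ (by omega : l - i ≤ h - j), hrest]
  field_simp

/-- `p_{j,l}` is written from the side of a random `l`-set meeting a fixed `j`-set; the exchange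
`C(h,l) C(l,i) C(h-l,j-i) = C(h,j) C(j,i) C(h-j,l-i)` turns it into the fraction of `j`-sets
meeting a fixed `l`-set `T` oddly. -/
theorem pjl_eq_card_filter_div_choose {h j : ℕ} (T : Finset (Fin h)) (hjh : j ≤ h) :
    pjl h j #T = #{S : Finset (Fin h) | Odd #(T ∩ S) ∧ #S = j} / h.choose j := by
  have hlh : #T ≤ h := card_le_univ T |>.trans_eq (Fintype.card_fin h)
  rw [card_filter_odd_card_inter, Fintype.card_fin, pjl, Nat.cast_sum, sum_div]
  refine sum_congr rfl fun i hi => ?_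
  simp only [mem_filter, mem_Icc, max_le_iff, le_min_iff] at hi
  have hchoose := Nat.choose_mul_choose_mul_choose_sub_comm hi.1.2.1 hi.1.2.2 hlh hjh (by omega)
  rw [div_eq_div_iff (by exact_mod_cast (Nat.choose_pos hlh).ne')
    (by exact_mod_cast (Nat.choose_pos hjh).ne')]
  have hchooseR := congrArg (Nat.cast : ℕ → ℝ) hchoose
  push_cast at hchooseR ⊢
  linear_combination -hchooseR

theorem sum_filter_colP_finsetEquivZModTwo (dmax : ℕ) (Ω : ℕ → ℝ) {h : ℕ}
    (P : Finset (Fin h) → Prop) [DecidablePred P] :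
    ∑ S with P S, colP dmax Ω (finsetEquivZModTwo (Fin h) S) =
      ∑ j ∈ Icc 1 dmax, Ω j / h.choose j * #{S | P S ∧ #S = j} := by
  have hcol (S : Finset (Fin h)) : colP dmax Ω (finsetEquivZModTwo (Fin h) S) =
      ∑ j ∈ Icc 1 dmax, if #S = j then Ω j / h.choose j else 0 := by
    simp only [sum_ite_eq, colP, hammingNorm_finsetEquivZModTwo, mem_Icc]
  simp_rw [hcol]
  rw [sum_comm]
  refine sum_congr rfl fun j _ => ?_
  rw [← sum_filter, filter_filter, sum_const, nsmul_eq_mul, mul_comm]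

theorem sum_colP_eq_one {dmax h : ℕ} {Ω : ℕ → ℝ} (hdh : dmax ≤ h)
    (hΩ : ∑ j ∈ Icc 1 dmax, Ω j = 1) :
    ∑ c : Fin h → ZMod 2, colP dmax Ω c = 1 := by
  have := sum_filter_colP_finsetEquivZModTwo dmax Ω (h := h) fun _ => True
  simp only [filter_true, true_and] at this
  rw [← (finsetEquivZModTwo (Fin h)).sum_comp, this, ← hΩ]
  refine sum_congr rfl fun j hj => ?_
  have hjh : j ≤ h := (mem_Icc.mp hj).2.trans hdh
  rw [univ_filter_card_eq, card_powersetCard, card_univ, Fintype.card_fin,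
    div_mul_cancel₀ _ (by exact_mod_cast (Nat.choose_pos hjh).ne')]

theorem sum_filter_dotProduct_ne_zero_colP {dmax h l : ℕ} {Ω : ℕ → ℝ} (hdh : dmax ≤ h)
    (v : Fin h → ZMod 2) (hwt : hammingNorm v = l) :
    ∑ c with v ⬝ᵥ c ≠ 0, colP dmax Ω c = pl dmax Ω h l := by
  obtain ⟨T, rfl⟩ := (finsetEquivZModTwo (Fin h)).surjective v
  rw [hammingNorm_finsetEquivZModTwo] at hwt
  rw [sum_filter, ← (finsetEquivZModTwo (Fin h)).sum_comp, ← sum_filter]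
  simp_rw [dotProduct_finsetEquivZModTwo, ZMod.natCast_ne_zero_iff_odd]
  rw [sum_filter_colP_finsetEquivZModTwo, pl]
  refine sum_congr rfl fun j hj => ?_
  rw [← hwt, pjl_eq_card_filter_div_choose T ((mem_Icc.mp hj).2.trans hdh)]
  ring

theorem stmt_2_general (dmax h n : ℕ) (Ω : ℕ → ℝ)
    (hΩsum : ∑ j ∈ Finset.Icc 1 dmax, Ω j = 1)
    (hdh : dmax ≤ h)
    (v : Fin h → ZMod 2) (l : ℕ) (hwt : hammingNorm v = l)
    (d : ℕ) :
    ∑ G ∈ Finset.univ.filter (fun G : Matrix (Fin h) (Fin n) (ZMod 2) =>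
        hammingNorm (Matrix.vecMul v G) = d),
      ∏ i : Fin n, colP dmax Ω (fun r => G r i) =
    (n.choose d : ℝ) * (pl dmax Ω h l) ^ d * (1 - pl dmax Ω h l) ^ (n - d) := by
  have hodd := sum_filter_dotProduct_ne_zero_colP (Ω := Ω) hdh v hwt
  have heven : ∑ c with ¬ v ⬝ᵥ c ≠ 0, colP dmax Ω c = 1 - pl dmax Ω h l := by
    rw [← sum_colP_eq_one hdh hΩsum, ← sum_filter_add_sum_filter_not univ (v ⬝ᵥ · ≠ 0),
      hodd, add_sub_cancel_left]
  have hcols := sum_prod_filter_card_eq_choose_mul_pow (ι := Fin n) (colP dmax Ω)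
    (v ⬝ᵥ · ≠ 0) d
  rw [Fintype.card_fin, hodd, heven] at hcols
  rw [← hcols]
  exact sum_equiv (Matrix.transposeAddEquiv _ _ _).toEquiv
    (fun G => by simp only [mem_filter, mem_univ, true_and]; rfl) fun G _ => rfl

/-- If `v ∈ F₂^h` has Hamming weight `l`, `1 ≤ l ≤ h`, and `G ∈ F₂^{h×n}` is the
random LT generator matrix (`n` i.i.d. LT columns), then for every `0 ≤ d ≤ n` the
probability that the codeword `vᵀG` has Hamming weight `d` equals
`C(n,d)·p_l^d·(1−p_l)^{n−d}`. -/
theorem stmt_2 (dmax h n : ℕ) (Ω : ℕ → ℝ)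
    (hΩpos : ∀ j ∈ Finset.Icc 1 dmax, 0 ≤ Ω j)
    (hΩsum : ∑ j ∈ Finset.Icc 1 dmax, Ω j = 1)
    (hpos : 0 < h) (hnpos : 0 < n) (hdh : dmax ≤ h)
    (v : Fin h → ZMod 2) (l : ℕ) (hwt : hammingNorm v = l) (hl1 : 1 ≤ l) (hlh : l ≤ h)
    (d : ℕ) (hd : d ≤ n) :
    ∑ G ∈ Finset.univ.filter (fun G : Matrix (Fin h) (Fin n) (ZMod 2) =>
        hammingNorm (Matrix.vecMul v G) = d),
      ∏ i : Fin n, colP dmax Ω (fun r => G r i) =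
    (n.choose d : ℝ) * (pl dmax Ω h l) ^ d * (1 - pl dmax Ω h l) ^ (n - d) :=
  stmt_2_general dmax h n Ω hΩsum hdh v l hwt d
end

section
/- (Lemma 2, positivity of the growth rate derivative, stated as strict monotonicity) Let Ω be an LT output degree distribution, r_i ∈ (0,1], r_o ∈ (0,1). Then the growth rate G is strictly increasing on the interval (0, 1/2): for all δ₁, δ₂ with 0 < δ₁ < δ₂ < 1/2 one has G(δ₁) < G(δ₂). -/
open Finset Filter

/-- Binary entropy function (base-2 logarithms). -/
noncomputable def Hb (x : ℝ) : ℝ := -x * Real.logb 2 x - (1 - x) * Real.logb 2 (1 - x)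

/-- `ρ_λ = (1/2)·Σ_{j=1}^{dmax} Ω_j·(1 − (1 − 2λ)^j)`. -/
noncomputable def rho (dmax : ℕ) (Ω : ℕ → ℝ) (lam : ℝ) : ℝ :=
  (1 / 2) * ∑ j ∈ Finset.Icc 1 dmax, Ω j * (1 - (1 - 2 * lam) ^ j)

open scoped Classical in
/-- The domain `𝒟_λ`: `(0,1)` if `Ω_j = 0` for every even `j`, and `(0,1]` otherwise. -/
noncomputable def Dset (dmax : ℕ) (Ω : ℕ → ℝ) : Set ℝ :=
  if ∀ j ∈ Finset.Icc 1 dmax, Even j → Ω j = 0 then Set.Ioo 0 1 else Set.Ioc 0 1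

/-- `f(δ,λ) = r_i·H_b(λ) + δ·log₂ ρ_λ + (1−δ)·log₂(1−ρ_λ)`. -/
noncomputable def ff (dmax : ℕ) (Ω : ℕ → ℝ) (ri δ lam : ℝ) : ℝ :=
  ri * Hb lam + δ * Real.logb 2 (rho dmax Ω lam) + (1 - δ) * Real.logb 2 (1 - rho dmax Ω lam)

/-- `f_max(δ) = sup_{λ ∈ 𝒟_λ} f(δ,λ)`. -/
noncomputable def fmax (dmax : ℕ) (Ω : ℕ → ℝ) (ri δ : ℝ) : ℝ :=
  sSup (ff dmax Ω ri δ '' Dset dmax Ω)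

/-- Growth rate `G(δ) = H_b(δ) − r_i·(1 − r_o) + f_max(δ)`. -/
noncomputable def Gr (dmax : ℕ) (Ω : ℕ → ℝ) (ri ro δ : ℝ) : ℝ :=
  Hb δ - ri * (1 - ro) + fmax dmax Ω ri δ

/-- Normalized typical minimum distance `δ*`: `0` if `lim_{δ→0⁺} G(δ) ≥ 0`, and
`inf {δ > 0 : G(δ) > 0}` otherwise. -/
noncomputable def deltaStar (dmax : ℕ) (Ω : ℕ → ℝ) (ri ro : ℝ) : ℝ :=
  if 0 ≤ limUnder (nhdsWithin 0 (Set.Ioi 0)) (Gr dmax Ω ri ro) then 0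
  else sInf {δ : ℝ | 0 < δ ∧ 0 < Gr dmax Ω ri ro δ}

/-!
Write `H_b(δ) + f(δ, λ) = r_i·H_b(λ) − D(δ ‖ ρ_λ)`, with `D` the binary relative entropy.
At a fixed `λ`, passing from `δ₁` to `δ₂` changes this by
`H_b(δ₂) − H_b(δ₁) + (δ₂ − δ₁)·log₂(ρ_λ / (1 − ρ_λ))`, which increases with `ρ_λ` and equals
`D(δ₁ ‖ δ₂) > 0` at `ρ_λ = δ₂`; so it is bounded below by a positive constant once `ρ_λ ≥ σ`
for some `σ < δ₂`. If `ρ_λ < σ = ρ_ν`, then `λ` folded into `[0, 1/2]` lies below `ν`, and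
`r_i·H_b(λ) − D(δ₁ ‖ ρ_λ) ≤ r_i·H_b(ν) < r_i·H_b(μ)`, the value at `δ₂` of the point `μ` with
`ρ_μ = δ₂`. A gain that is uniform in `λ` survives taking suprema.
-/

open Real

lemma Hb_eq_binEntropy_div (x : ℝ) : Hb x = binEntropy x / log 2 := by
  simp only [Hb, binEntropy, logb, log_inv]
  ring

lemma Hb_one_sub (x : ℝ) : Hb (1 - x) = Hb x := by
  rw [Hb_eq_binEntropy_div, Hb_eq_binEntropy_div, binEntropy_one_sub]

lemma Hb_le_one (x : ℝ) : Hb x ≤ 1 := by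
  rw [Hb_eq_binEntropy_div, div_le_one (log_pos one_lt_two)]
  exact binEntropy_le_log_two

lemma Hb_strictMonoOn : StrictMonoOn Hb (Set.Icc 0 (1 / 2)) := by
  intro a ha b hb hab
  rw [Hb_eq_binEntropy_div, Hb_eq_binEntropy_div,
    div_lt_div_iff_of_pos_right (log_pos one_lt_two)]
  exact binEntropy_strictMonoOn (by simpa using ha) (by simpa using hb) hab

lemma mul_log_div_lt_sub {a b : ℝ} (ha : 0 < a) (hb : 0 < b) (hab : b ≠ a) :
    a * log (b / a) < b - a := by
  have hba : b / a ≠ 1 := fun h => hab ((div_eq_one_iff_eq ha.ne').mp h)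
  calc a * log (b / a) < a * (b / a - 1) :=
        mul_lt_mul_of_pos_left (log_lt_sub_one_of_pos (div_pos hb ha) hba) ha
    _ = b - a := by field_simp

lemma mul_log_div_le_sub {a b : ℝ} (ha : 0 < a) (hb : 0 < b) : a * log (b / a) ≤ b - a := by
  rcases eq_or_ne b a with rfl | hab
  · simp
  · exact (mul_log_div_lt_sub ha hb hab).le

/-- Binary relative entropy `D(x ‖ p)` in bits, written as cross-entropy minus entropy. -/
noncomputable def binKL (x p : ℝ) : ℝ := -x * logb 2 p - (1 - x) * logb 2 (1 - p) - Hb x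

lemma binKL_self (x : ℝ) : binKL x x = 0 := by
  simp only [binKL, Hb]
  ring

lemma binKL_zero_right (x : ℝ) : binKL x 0 = -Hb x := by
  simp [binKL]

lemma binKL_sub_binKL (x y p : ℝ) :
    binKL x p - binKL y p = Hb y - Hb x + (y - x) * (logb 2 p - logb 2 (1 - p)) := by
  simp only [binKL]
  ring

lemma binKL_eq_neg_log_div {x p : ℝ} (hx : x ∈ Set.Ioo 0 1) (hp : p ∈ Set.Ioo 0 1) :
    binKL x p = -(x * log (p / x) + (1 - x) * log ((1 - p) / (1 - x))) / log 2 := by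
  obtain ⟨hx0, hx1⟩ := hx
  obtain ⟨hp0, hp1⟩ := hp
  rw [log_div hp0.ne' hx0.ne', log_div (sub_pos.2 hp1).ne' (sub_pos.2 hx1).ne']
  simp only [binKL, Hb, logb]
  ring

lemma binKL_pos {x p : ℝ} (hx : x ∈ Set.Ioo 0 1) (hp : p ∈ Set.Ioo 0 1) (hpx : p ≠ x) :
    0 < binKL x p := by
  rw [binKL_eq_neg_log_div hx hp]
  obtain ⟨hx0, hx1⟩ := hx
  obtain ⟨hp0, hp1⟩ := hp
  have h₁ := mul_log_div_lt_sub hx0 hp0 hpx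
  have h₂ := mul_log_div_le_sub (sub_pos.2 hx1) (sub_pos.2 hp1)
  exact div_pos (by linarith) (log_pos one_lt_two)

lemma binKL_nonneg {x p : ℝ} (hx : x ∈ Set.Ioo 0 1) (hp : p ∈ Set.Ioo 0 1) : 0 ≤ binKL x p := by
  rcases eq_or_ne p x with rfl | hpx
  · rw [binKL_self]
  · exact (binKL_pos hx hp hpx).le

lemma binKL_sub_binKL_le {x y p q : ℝ} (hxy : x ≤ y) (hp : 0 < p) (hpq : p ≤ q) (hq : q < 1) :
    binKL x p - binKL y p ≤ binKL x q - binKL y q := by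
  rw [binKL_sub_binKL, binKL_sub_binKL]
  gcongr <;> norm_num

lemma continuousAt_binKL (x : ℝ) {p : ℝ} (hp0 : p ≠ 0) (hp1 : p ≠ 1) :
    ContinuousAt (binKL x) p := by
  have : (1 : ℝ) - p ≠ 0 := sub_ne_zero.2 (Ne.symm hp1)
  unfold binKL
  fun_prop (disch := assumption)

lemma csSup_image_add_le_of_forall_exists {α : Type*} {s : Set α} {f g : α → ℝ} {a b : ℝ}
    (hs : s.Nonempty) (hg : BddAbove (g '' s)) (h : ∀ x ∈ s, ∃ y ∈ s, f x + a ≤ g y + b) :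
    sSup (f '' s) + a ≤ sSup (g '' s) + b := by
  rw [← le_sub_iff_add_le]
  refine csSup_le (hs.image f) ?_
  rintro _ ⟨x, hx, rfl⟩
  obtain ⟨y, hy, hxy⟩ := h x hx
  have := le_csSup hg (Set.mem_image_of_mem g hy)
  linarith

section Rho

variable {dmax : ℕ} {Ω : ℕ → ℝ}

lemma Dset_subset_Ioc : Dset dmax Ω ⊆ Set.Ioc 0 1 := by
  unfold Dset
  split_ifs
  exacts [Set.Ioo_subset_Ioc_self, subset_rfl]

lemma Ioo_subset_Dset : Set.Ioo 0 1 ⊆ Dset dmax Ω := by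
  unfold Dset
  split_ifs
  exacts [subset_rfl, Set.Ioo_subset_Ioc_self]

lemma exists_even_of_one_mem_Dset (h : 1 ∈ Dset dmax Ω) :
    ∃ j ∈ Finset.Icc 1 dmax, Even j ∧ Ω j ≠ 0 := by
  unfold Dset at h
  split_ifs at h with hodd
  · exact absurd h.2 (lt_irrefl 1)
  · push Not at hodd
    exact hodd

lemma rho_zero : rho dmax Ω 0 = 0 := by
  simp [rho]

lemma rho_half (hΩsum : ∑ j ∈ Finset.Icc 1 dmax, Ω j = 1) : rho dmax Ω (1 / 2) = 1 / 2 := by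
  have hterm : ∀ j ∈ Finset.Icc 1 dmax, Ω j * (1 - (1 - 2 * (1 / 2 : ℝ)) ^ j) = Ω j := by
    intro j hj
    rw [show (1 : ℝ) - 2 * (1 / 2) = 0 by norm_num, zero_pow (by grind), sub_zero, mul_one]
  rw [rho, Finset.sum_congr rfl hterm, hΩsum, mul_one]

lemma continuous_rho : Continuous (rho dmax Ω) := by
  unfold rho
  fun_prop

lemma one_sub_rho (hΩsum : ∑ j ∈ Finset.Icc 1 dmax, Ω j = 1) (lam : ℝ) :
    1 - rho dmax Ω lam = 1 / 2 * ∑ j ∈ Finset.Icc 1 dmax, Ω j * (1 + (1 - 2 * lam) ^ j) := by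
  have hsum : ∑ j ∈ Finset.Icc 1 dmax, Ω j * (1 - (1 - 2 * lam) ^ j)
      + ∑ j ∈ Finset.Icc 1 dmax, Ω j * (1 + (1 - 2 * lam) ^ j)
      = 2 * ∑ j ∈ Finset.Icc 1 dmax, Ω j := by
    rw [← Finset.sum_add_distrib, Finset.mul_sum]
    exact Finset.sum_congr rfl fun j _ => by ring
  rw [hΩsum] at hsum
  rw [rho]
  linarith

lemma abs_one_sub_two_mul_le {lam : ℝ} (h : lam ∈ Set.Icc 0 1) : |1 - 2 * lam| ≤ 1 :=
  abs_le.2 ⟨by linarith [h.2], by linarith [h.1]⟩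

lemma rho_nonneg (hΩpos : ∀ j ∈ Finset.Icc 1 dmax, 0 ≤ Ω j) {lam : ℝ}
    (hlam : lam ∈ Set.Icc 0 1) :
    0 ≤ rho dmax Ω lam := by
  refine mul_nonneg one_half_pos.le (Finset.sum_nonneg fun j hj => mul_nonneg (hΩpos j hj) ?_)
  have := (abs_le.1 (abs_pow (1 - 2 * lam) j ▸
    pow_le_one₀ (abs_nonneg _) (abs_one_sub_two_mul_le hlam))).2
  linarith

lemma rho_lt_one (hΩpos : ∀ j ∈ Finset.Icc 1 dmax, 0 ≤ Ω j)
    (hΩsum : ∑ j ∈ Finset.Icc 1 dmax, Ω j = 1) {lam : ℝ} (hlam : lam ∈ Dset dmax Ω) :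
    rho dmax Ω lam < 1 := by
  obtain ⟨hlam0, hlam1⟩ := Dset_subset_Ioc hlam
  have habs := abs_one_sub_two_mul_le ⟨hlam0.le, hlam1⟩
  rw [← sub_pos, one_sub_rho hΩsum]
  refine mul_pos one_half_pos (Finset.sum_pos' (fun j hj => mul_nonneg (hΩpos j hj) ?_) ?_)
  · have := (abs_le.1 (abs_pow (1 - 2 * lam) j ▸ pow_le_one₀ (abs_nonneg _) habs)).1
    linarith
  rcases hlam1.lt_or_eq with hlt | rfl
  · obtain ⟨j, hj, hΩj⟩ := Finset.exists_ne_zero_of_sum_ne_zero (hΩsum ▸ one_ne_zero)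
    have hpow : |(1 - 2 * lam) ^ j| < 1 := by
      rw [abs_pow]
      exact pow_lt_one₀ (abs_nonneg _) (abs_lt.2 ⟨by linarith, by linarith⟩) (by grind)
    exact ⟨j, hj, mul_pos ((hΩpos j hj).lt_of_ne' hΩj) (by linarith [(abs_lt.1 hpow).1])⟩
  · obtain ⟨j, hj, heven, hΩj⟩ := exists_even_of_one_mem_Dset hlam
    refine ⟨j, hj, mul_pos ((hΩpos j hj).lt_of_ne' hΩj) ?_⟩
    norm_num [heven.neg_one_pow]

lemma rho_monotoneOn (hΩpos : ∀ j ∈ Finset.Icc 1 dmax, 0 ≤ Ω j) :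
    MonotoneOn (rho dmax Ω) (Set.Icc 0 (1 / 2)) := by
  intro a ha b hb hab
  refine mul_le_mul_of_nonneg_left (Finset.sum_le_sum fun j hj => ?_) one_half_pos.le
  refine mul_le_mul_of_nonneg_left ?_ (hΩpos j hj)
  have := pow_le_pow_left₀ (by linarith [hb.2]) (by linarith : 1 - 2 * b ≤ 1 - 2 * a) j
  linarith

lemma rho_one_sub_le (hΩpos : ∀ j ∈ Finset.Icc 1 dmax, 0 ≤ Ω j) {lam : ℝ} (h : 1 / 2 ≤ lam) :
    rho dmax Ω (1 - lam) ≤ rho dmax Ω lam := by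
  refine mul_le_mul_of_nonneg_left (Finset.sum_le_sum fun j hj => ?_) one_half_pos.le
  refine mul_le_mul_of_nonneg_left ?_ (hΩpos j hj)
  have : (1 - 2 * lam) ^ j ≤ (1 - 2 * (1 - lam)) ^ j := by
    rw [show 1 - 2 * (1 - lam) = |1 - 2 * lam| by rw [abs_of_nonpos (by linarith)]; ring,
      ← abs_pow]
    exact le_abs_self _
  linarith

lemma exists_rho_eq (hΩsum : ∑ j ∈ Finset.Icc 1 dmax, Ω j = 1) {t : ℝ}
    (ht : t ∈ Set.Ioo 0 (1 / 2)) : ∃ mu ∈ Set.Ioo 0 (1 / 2), rho dmax Ω mu = t := by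
  have := intermediate_value_Ioo (by norm_num : (0 : ℝ) ≤ 1 / 2)
    (continuous_rho (dmax := dmax) (Ω := Ω)).continuousOn
  rw [rho_zero, rho_half hΩsum] at this
  exact this ht

/-- Folding `λ` into `[0, 1/2]` by `λ ↦ 1 - λ` keeps `H_b` and does not increase `ρ`. -/
lemma Hb_le_of_rho_lt (hΩpos : ∀ j ∈ Finset.Icc 1 dmax, 0 ≤ Ω j) {lam nu : ℝ}
    (hlam : lam ∈ Set.Icc 0 1) (hnu : nu ∈ Set.Icc 0 (1 / 2))
    (h : rho dmax Ω lam < rho dmax Ω nu) : Hb lam ≤ Hb nu := by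
  obtain ⟨lam', hlam', hHb, hrho⟩ : ∃ lam' ∈ Set.Icc (0 : ℝ) (1 / 2),
      Hb lam' = Hb lam ∧ rho dmax Ω lam' ≤ rho dmax Ω lam := by
    rcases le_total lam (1 / 2) with hle | hle
    · exact ⟨lam, ⟨hlam.1, hle⟩, rfl, le_rfl⟩
    · exact ⟨1 - lam, ⟨by linarith [hlam.2], by linarith⟩, Hb_one_sub lam,
        rho_one_sub_le hΩpos hle⟩
  have hlt : lam' < nu := lt_of_not_ge fun hle =>
    (rho_monotoneOn hΩpos hnu hlam' hle).not_gt (hrho.trans_lt h)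
  exact hHb ▸ Hb_strictMonoOn.monotoneOn hlam' hnu hlt.le

end Rho

section GrowthRate

variable {dmax : ℕ} {Ω : ℕ → ℝ} {ri : ℝ}

lemma Hb_add_ff (δ lam : ℝ) :
    Hb δ + ff dmax Ω ri δ lam = ri * Hb lam - binKL δ (rho dmax Ω lam) := by
  simp only [ff, binKL]
  ring

lemma ff_le (hri : 0 ≤ ri) {δ lam : ℝ} (hδ : δ ∈ Set.Icc 0 1)
    (hρ : rho dmax Ω lam ∈ Set.Icc 0 1) : ff dmax Ω ri δ lam ≤ ri := by
  have hHb := mul_le_mul_of_nonneg_left (Hb_le_one lam) hri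
  have hlog₁ := mul_nonpos_of_nonneg_of_nonpos hδ.1 (logb_nonpos one_lt_two hρ.1 hρ.2)
  have hlog₂ := mul_nonpos_of_nonneg_of_nonpos (sub_nonneg.2 hδ.2)
    (logb_nonpos one_lt_two (sub_nonneg.2 hρ.2) (by linarith [hρ.1]))
  unfold ff
  linarith

lemma Gr_add_le_of_forall_exists (hΩpos : ∀ j ∈ Finset.Icc 1 dmax, 0 ≤ Ω j)
    (hΩsum : ∑ j ∈ Finset.Icc 1 dmax, Ω j = 1) (hri : 0 ≤ ri) (ro : ℝ) {δ₁ δ₂ c : ℝ}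
    (hδ₂ : δ₂ ∈ Set.Icc 0 1)
    (h : ∀ lam ∈ Dset dmax Ω, ∃ mu ∈ Dset dmax Ω,
      Hb δ₁ + ff dmax Ω ri δ₁ lam + c ≤ Hb δ₂ + ff dmax Ω ri δ₂ mu) :
    Gr dmax Ω ri ro δ₁ + c ≤ Gr dmax Ω ri ro δ₂ := by
  have hne : (Dset dmax Ω).Nonempty := ⟨1 / 2, Ioo_subset_Dset ⟨by norm_num, by norm_num⟩⟩
  have hbdd : BddAbove (ff dmax Ω ri δ₂ '' Dset dmax Ω) := by
    refine ⟨ri, ?_⟩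
    rintro _ ⟨lam, hlam, rfl⟩
    exact ff_le hri hδ₂ ⟨rho_nonneg hΩpos (Set.Ioc_subset_Icc_self (Dset_subset_Ioc hlam)),
      (rho_lt_one hΩpos hΩsum hlam).le⟩
  have := csSup_image_add_le_of_forall_exists (f := ff dmax Ω ri δ₁) (a := Hb δ₁ + c)
    (b := Hb δ₂) hne hbdd fun lam hlam => (h lam hlam).imp fun mu hmu => ⟨hmu.1, by linarith [hmu.2]⟩
  unfold Gr fmax
  linarith

lemma exists_lt_binKL_sub_binKL_pos {x y mu : ℝ}
    (hx : x ∈ Set.Ioo 0 1) (hy : y ∈ Set.Ioo 0 1) (hxy : x ≠ y) (hmu : 0 < mu)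
    (hρmu : rho dmax Ω mu = y) :
    ∃ nu ∈ Set.Ioo 0 mu, 0 < rho dmax Ω nu ∧
      0 < binKL x (rho dmax Ω nu) - binKL y (rho dmax Ω nu) := by
  have hρ : ContinuousAt (rho dmax Ω) mu := continuous_rho.continuousAt
  have hgain : ContinuousAt (fun l => binKL x (rho dmax Ω l) - binKL y (rho dmax Ω l)) mu :=
    ((continuousAt_binKL x hy.1.ne' hy.2.ne).comp_of_eq hρ hρmu).sub
      ((continuousAt_binKL y hy.1.ne' hy.2.ne).comp_of_eq hρ hρmu)
  have hgain_mu : 0 < binKL x (rho dmax Ω mu) - binKL y (rho dmax Ω mu) := by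
    rw [hρmu, binKL_self, sub_zero]
    exact binKL_pos hx hy hxy.symm
  have hev := (hρ.eventually (lt_mem_nhds (hρmu ▸ hy.1))).and
    (hgain.eventually (lt_mem_nhds hgain_mu))
  exact (Filter.Eventually.and (Ioo_mem_nhdsLT hmu) (nhdsWithin_le_nhds hev)).exists

lemma exists_uniform_gain (hΩpos : ∀ j ∈ Finset.Icc 1 dmax, 0 ≤ Ω j)
    (hΩsum : ∑ j ∈ Finset.Icc 1 dmax, Ω j = 1) (hri : 0 < ri) {δ₁ δ₂ : ℝ}
    (h1 : 0 < δ₁) (h12 : δ₁ < δ₂) (h2 : δ₂ < 1 / 2) :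
    ∃ c > 0, ∀ lam ∈ Dset dmax Ω, ∃ mu ∈ Dset dmax Ω,
      Hb δ₁ + ff dmax Ω ri δ₁ lam + c ≤ Hb δ₂ + ff dmax Ω ri δ₂ mu := by
  have hδ₁ : δ₁ ∈ Set.Ioo 0 1 := ⟨h1, by linarith⟩
  have hδ₂ : δ₂ ∈ Set.Ioo 0 1 := ⟨by linarith, by linarith⟩
  obtain ⟨mu, hmu, hρmu⟩ := exists_rho_eq hΩsum ⟨hδ₂.1, h2⟩
  obtain ⟨nu, hnu, hρnu, hgain⟩ :=
    exists_lt_binKL_sub_binKL_pos hδ₁ hδ₂ h12.ne hmu.1 hρmu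
  set σ := rho dmax Ω nu
  have hnu' : nu ∈ Set.Icc 0 (1 / 2) := ⟨hnu.1.le, by linarith [hnu.2, hmu.2]⟩
  have hHbδ := Hb_strictMonoOn ⟨h1.le, by linarith⟩ ⟨hδ₂.1.le, h2.le⟩ h12
  have hHbnu := Hb_strictMonoOn hnu' ⟨hmu.1.le, hmu.2.le⟩ hnu.2
  set c := min (min (Hb δ₂ - Hb δ₁) (binKL δ₁ σ - binKL δ₂ σ)) (ri * (Hb mu - Hb nu))
  have hc₁ : c ≤ Hb δ₂ - Hb δ₁ := (min_le_left _ _).trans (min_le_left _ _)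
  have hc₂ : c ≤ binKL δ₁ σ - binKL δ₂ σ := (min_le_left _ _).trans (min_le_right _ _)
  have hc₃ : c ≤ ri * (Hb mu - Hb nu) := min_le_right _ _
  refine ⟨c, lt_min (lt_min (sub_pos.2 hHbδ) hgain) (mul_pos hri (sub_pos.2 hHbnu)), ?_⟩
  intro lam hlam
  have hlam01 : lam ∈ Set.Icc 0 1 := Set.Ioc_subset_Icc_self (Dset_subset_Ioc hlam)
  have hp1 : rho dmax Ω lam < 1 := rho_lt_one hΩpos hΩsum hlam
  have hsame : Hb δ₂ + ff dmax Ω ri δ₂ lam = Hb δ₁ + ff dmax Ω ri δ₁ lam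
      + (binKL δ₁ (rho dmax Ω lam) - binKL δ₂ (rho dmax Ω lam)) := by
    rw [Hb_add_ff, Hb_add_ff]
    ring
  rcases (rho_nonneg hΩpos hlam01).eq_or_lt with hp0 | hp0
  · -- `ρ_λ = 0` occurs at `λ = 1` when `Ω` lives on even degrees; there `log₂ 0 = 0`.
    refine ⟨lam, hlam, ?_⟩
    rw [hsame, ← hp0, binKL_zero_right, binKL_zero_right]
    linarith
  rcases le_or_gt σ (rho dmax Ω lam) with hσp | hpσ
  · refine ⟨lam, hlam, ?_⟩
    have := binKL_sub_binKL_le h12.le hρnu hσp hp1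
    linarith
  · refine ⟨mu, Ioo_subset_Dset ⟨hmu.1, by linarith [hmu.2]⟩, ?_⟩
    rw [Hb_add_ff, Hb_add_ff, hρmu, binKL_self]
    have hKL := binKL_nonneg hδ₁ ⟨hp0, hp1⟩
    have hHb := mul_le_mul_of_nonneg_left (Hb_le_of_rho_lt hΩpos hlam01 hnu' hpσ) hri.le
    linarith

end GrowthRate

theorem stmt_7_general (dmax : ℕ) (Ω : ℕ → ℝ)
    (hΩpos : ∀ j ∈ Finset.Icc 1 dmax, 0 ≤ Ω j)
    (hΩsum : ∑ j ∈ Finset.Icc 1 dmax, Ω j = 1)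
    (ri ro : ℝ) (hri : ri ∈ Set.Ioc (0 : ℝ) 1)
    (δ₁ δ₂ : ℝ) (h1 : 0 < δ₁) (h12 : δ₁ < δ₂) (h2 : δ₂ < 1 / 2) :
    Gr dmax Ω ri ro δ₁ < Gr dmax Ω ri ro δ₂ := by
  obtain ⟨c, hc, hgain⟩ := exists_uniform_gain hΩpos hΩsum hri.1 h1 h12 h2
  have := Gr_add_le_of_forall_exists hΩpos hΩsum hri.1.le ro ⟨by linarith, by linarith⟩ hgain
  linarith

/-- Lemma 2 (positivity of the growth rate derivative, stated as strict monotonicity):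
the growth rate `G` is strictly increasing on `(0, 1/2)`. -/
theorem stmt_7 (dmax : ℕ) (Ω : ℕ → ℝ)
    (hΩpos : ∀ j ∈ Finset.Icc 1 dmax, 0 ≤ Ω j)
    (hΩsum : ∑ j ∈ Finset.Icc 1 dmax, Ω j = 1)
    (ri ro : ℝ) (hri : ri ∈ Set.Ioc (0 : ℝ) 1) (hro : ro ∈ Set.Ioo (0 : ℝ) 1)
    (δ₁ δ₂ : ℝ) (h1 : 0 < δ₁) (h12 : δ₁ < δ₂) (h2 : δ₂ < 1 / 2) :
    Gr dmax Ω ri ro δ₁ < Gr dmax Ω ri ro δ₂ :=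
  stmt_7_general dmax Ω hΩpos hΩsum ri ro hri δ₁ δ₂ h1 h12 h2
end
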